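/- Let ν be a distribution on a set X, φ : X → ℝ^d with ‖φ(x)‖₂ ≤ C for all x, G = E_ν[φφᵀ] invertible, and Ḡ_K = Σ_{k=1}^K φ(x_k)φ(x_k)ᵀ + λI with x_k i.i.d. ∼ ν. If ‖Ḡ_K/K − (G + (λ/K)I)‖ ≤ 1/(2‖G⁻¹‖) and λ/K ≤ 1/(4‖G⁻¹‖), then for all u ∈ ℝ^d: ‖u‖_{Ḡ_K⁻¹} ≤ (2/√K)·‖u‖_{G⁻¹}. -/

import Mathlib

/-!
Write `A = Ḡ_K`. Since `‖G⁻¹‖⁻¹ • 1 ≤ G` in the Loewner order, the hypothesis on `A / K` gives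
`A / K ≥ G + (λ / K) • 1 - (2‖G⁻¹‖)⁻¹ • 1 ≥ G / 2`, i.e. `(K / 2) • G ≤ A`. Inversion is
antitone in the Loewner order, so `A⁻¹ ≤ (2 / K) • G⁻¹ ≤ (4 / K) • G⁻¹`, and taking square roots
of the quadratic forms gives the claim. Both Loewner facts are proved on quadratic forms through
the Cauchy–Schwarz inequality `(xᵀGy)² ≤ (xᵀGx)(yᵀGy)`.
-/

open Matrix

/-- Operator (spectral) norm of a real `d × d` matrix. -/
noncomputable def matOpNorm {d : ℕ} (M : Matrix (Fin d) (Fin d) ℝ) : ℝ :=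
  ‖Matrix.toEuclideanCLM (𝕜 := ℝ) M‖

/-- Weighted norm `‖u‖_A = √(uᵀ A u)`. -/
noncomputable def wNorm {d : ℕ} (A : Matrix (Fin d) (Fin d) ℝ) (u : Fin d → ℝ) : ℝ :=
  Real.sqrt (u ⬝ᵥ A.mulVec u)

namespace Matrix

variable {n : Type*} [Fintype n]

theorem PosSemidef.dotProduct_mulVec_sq_le {A : Matrix n n ℝ} (hA : A.PosSemidef) (x y : n → ℝ) :
    (x ⬝ᵥ A *ᵥ y) ^ 2 ≤ (x ⬝ᵥ A *ᵥ x) * (y ⬝ᵥ A *ᵥ y) := by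
  have hsymm : y ⬝ᵥ A *ᵥ x = x ⬝ᵥ A *ᵥ y := by
    rw [dotProduct_mulVec, dotProduct_comm, ← mulVec_transpose,
      ← conjTranspose_eq_transpose_of_trivial, hA.isHermitian]
  have hquad : ∀ t : ℝ,
      0 ≤ (y ⬝ᵥ A *ᵥ y) * (t * t) + (2 * (x ⬝ᵥ A *ᵥ y)) * t + (x ⬝ᵥ A *ᵥ x) := by
    intro t
    have := hA.dotProduct_mulVec_nonneg (x + t • y)
    simp only [star_trivial, mulVec_add, mulVec_smul, add_dotProduct, dotProduct_add,
      smul_dotProduct, dotProduct_smul, smul_eq_mul, hsymm] at this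
    linarith
  have := discrim_le_zero hquad
  rw [discrim] at this
  nlinarith

theorem PosDef.dotProduct_inv_mulVec_le [DecidableEq n] {A G : Matrix n n ℝ} (hG : G.PosDef)
    {c : ℝ} (hc : 0 < c) (hle : ∀ x, c * (x ⬝ᵥ G *ᵥ x) ≤ x ⬝ᵥ A *ᵥ x) (u : n → ℝ) :
    u ⬝ᵥ A⁻¹ *ᵥ u ≤ c⁻¹ * (u ⬝ᵥ G⁻¹ *ᵥ u) := by
  have hr : 0 ≤ u ⬝ᵥ G⁻¹ *ᵥ u := by simpa using hG.inv.posSemidef.dotProduct_mulVec_nonneg u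
  by_cases hA : IsUnit A.det
  swap
  · rw [nonsing_inv_apply_not_isUnit A hA, zero_mulVec, dotProduct_zero]
    positivity
  set t := u ⬝ᵥ A⁻¹ *ᵥ u
  set w := A⁻¹ *ᵥ u
  have hGinv : G *ᵥ G⁻¹ *ᵥ u = u := by
    rw [mulVec_mulVec, mul_nonsing_inv _ ((isUnit_iff_isUnit_det G).mp hG.isUnit), one_mulVec]
  have hwAw : w ⬝ᵥ A *ᵥ w = t := by
    rw [mulVec_mulVec, mul_nonsing_inv _ hA, one_mulVec, dotProduct_comm]
  have hcs : t ^ 2 ≤ (w ⬝ᵥ G *ᵥ w) * (u ⬝ᵥ G⁻¹ *ᵥ u) := by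
    have := hG.posSemidef.dotProduct_mulVec_sq_le w (G⁻¹ *ᵥ u)
    rwa [hGinv, dotProduct_comm w, dotProduct_comm _ u] at this
  have hwGw : c * (w ⬝ᵥ G *ᵥ w) ≤ t := hwAw ▸ hle w
  rw [← div_eq_inv_mul, le_div_iff₀ hc]
  rcases le_or_gt t 0 with ht | ht
  · nlinarith
  · nlinarith [mul_le_mul_of_nonneg_right hwGw hr]

end Matrix

section matOpNorm

variable {d : ℕ}

open scoped RealInnerProductSpace in
theorem dotProduct_mulVec_le_matOpNorm (M : Matrix (Fin d) (Fin d) ℝ) (x : Fin d → ℝ) :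
    x ⬝ᵥ M *ᵥ x ≤ matOpNorm M * (x ⬝ᵥ x) := by
  set x' : EuclideanSpace ℝ (Fin d) := WithLp.toLp 2 x
  have hx : ‖x'‖ ^ 2 = x ⬝ᵥ x := by
    rw [← real_inner_self_eq_norm_sq, EuclideanSpace.inner_toLp_toLp, star_trivial]
  calc x ⬝ᵥ M *ᵥ x = ⟪x', toEuclideanCLM (𝕜 := ℝ) M x'⟫ := (inner_toEuclideanCLM M x' x').symm
    _ ≤ ‖x'‖ * ‖toEuclideanCLM (𝕜 := ℝ) M x'‖ := real_inner_le_norm _ _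
    _ ≤ ‖x'‖ * (matOpNorm M * ‖x'‖) := by gcongr; exact ContinuousLinearMap.le_opNorm _ _
    _ = matOpNorm M * (x ⬝ᵥ x) := by rw [← hx]; ring

theorem matOpNorm_sub_comm (A B : Matrix (Fin d) (Fin d) ℝ) :
    matOpNorm (A - B) = matOpNorm (B - A) := by
  rw [matOpNorm, matOpNorm, ← neg_sub, map_neg, norm_neg]

theorem Matrix.PosDef.dotProduct_div_matOpNorm_inv_le {G : Matrix (Fin d) (Fin d) ℝ}
    (hG : G.PosDef) (x : Fin d → ℝ) : x ⬝ᵥ x / matOpNorm G⁻¹ ≤ x ⬝ᵥ G *ᵥ x := by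
  have hN0 : 0 ≤ matOpNorm G⁻¹ := norm_nonneg _
  rcases hN0.eq_or_lt with hN | hN
  · rw [← hN, div_zero]
    simpa using hG.posSemidef.dotProduct_mulVec_nonneg x
  -- `‖G⁻¹‖⁻¹ • G⁻¹ ≤ 1`, and inverting both sides gives `‖G⁻¹‖⁻¹ • 1 ≤ G`.
  have hle : ∀ y, (matOpNorm G⁻¹)⁻¹ * (y ⬝ᵥ G⁻¹ *ᵥ y) ≤
      y ⬝ᵥ (1 : Matrix (Fin d) (Fin d) ℝ) *ᵥ y := by
    intro y
    rw [one_mulVec, inv_mul_le_iff₀ hN]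
    exact dotProduct_mulVec_le_matOpNorm G⁻¹ y
  have := hG.inv.dotProduct_inv_mulVec_le (inv_pos.mpr hN) hle x
  rwa [inv_one, one_mulVec, inv_inv,
    nonsing_inv_nonsing_inv _ ((isUnit_iff_isUnit_det G).mp hG.isUnit), ← div_le_iff₀' hN] at this

theorem Matrix.PosDef.half_dotProduct_mulVec_le_of_matOpNorm_sub_le
    {B G : Matrix (Fin d) (Fin d) ℝ} (hG : G.PosDef)
    (hBG : matOpNorm (B - G) ≤ 1 / (2 * matOpNorm G⁻¹)) (x : Fin d → ℝ) :
    (x ⬝ᵥ G *ᵥ x) / 2 ≤ x ⬝ᵥ B *ᵥ x := by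
  have hxx : 0 ≤ x ⬝ᵥ x := by simpa using dotProduct_self_star_nonneg x
  have hdev : x ⬝ᵥ (G - B) *ᵥ x ≤ (x ⬝ᵥ G *ᵥ x) / 2 :=
    calc x ⬝ᵥ (G - B) *ᵥ x ≤ matOpNorm (B - G) * (x ⬝ᵥ x) := by
          rw [← matOpNorm_sub_comm]; exact dotProduct_mulVec_le_matOpNorm _ x
      _ ≤ 1 / (2 * matOpNorm G⁻¹) * (x ⬝ᵥ x) := by gcongr
      _ = (x ⬝ᵥ x / matOpNorm G⁻¹) / 2 := by ring
      _ ≤ (x ⬝ᵥ G *ᵥ x) / 2 := by gcongr; exact hG.dotProduct_div_matOpNorm_inv_le x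
  rw [sub_mulVec, dotProduct_sub] at hdev
  linarith

end matOpNorm

theorem stmt14_general {d K : ℕ} (hK : 0 < K) (lam : ℝ) (hlam : 0 < lam)
    (φ : Fin K → Fin d → ℝ)
    (G : Matrix (Fin d) (Fin d) ℝ) (hG : G.PosDef)
    (hclose : matOpNorm ((K : ℝ)⁻¹ •
        (∑ k, Matrix.vecMulVec (φ k) (φ k) + lam • (1 : Matrix (Fin d) (Fin d) ℝ))
        - (G + (lam / K) • (1 : Matrix (Fin d) (Fin d) ℝ)))
      ≤ 1 / (2 * matOpNorm G⁻¹)) :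
    ∀ u : Fin d → ℝ,
      wNorm (∑ k, Matrix.vecMulVec (φ k) (φ k) + lam • (1 : Matrix (Fin d) (Fin d) ℝ))⁻¹ u
        ≤ (2 / Real.sqrt K) * wNorm G⁻¹ u := by
  intro u
  set A := ∑ k, vecMulVec (φ k) (φ k) + lam • (1 : Matrix (Fin d) (Fin d) ℝ)
  have hKpos : (0 : ℝ) < K := by exact_mod_cast hK
  have hAG : ∀ x, (K / 2 : ℝ) * (x ⬝ᵥ G *ᵥ x) ≤ x ⬝ᵥ A *ᵥ x := by
    intro x
    have hB := hG.half_dotProduct_mulVec_le_of_matOpNorm_sub_le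
      (B := (K : ℝ)⁻¹ • A - (lam / K) • 1) (by rwa [sub_right_comm, sub_sub]) x
    rw [sub_mulVec, smul_mulVec, smul_mulVec, one_mulVec, dotProduct_sub, dotProduct_smul,
      dotProduct_smul, smul_eq_mul, smul_eq_mul] at hB
    have hridge : 0 ≤ lam / K * (x ⬝ᵥ x) :=
      mul_nonneg (by positivity) (by simpa using dotProduct_self_star_nonneg x)
    calc (K / 2 : ℝ) * (x ⬝ᵥ G *ᵥ x) = K * ((x ⬝ᵥ G *ᵥ x) / 2) := by ring
      _ ≤ K * ((K : ℝ)⁻¹ * (x ⬝ᵥ A *ᵥ x)) := by gcongr; linarith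
      _ = x ⬝ᵥ A *ᵥ x := mul_inv_cancel_left₀ hKpos.ne' _
  have hAinv := hG.dotProduct_inv_mulVec_le (by positivity) hAG u
  have hr : 0 ≤ u ⬝ᵥ G⁻¹ *ᵥ u := by simpa using hG.inv.posSemidef.dotProduct_mulVec_nonneg u
  calc wNorm A⁻¹ u ≤ Real.sqrt (4 / K * (u ⬝ᵥ G⁻¹ *ᵥ u)) := by
        refine Real.sqrt_le_sqrt (hAinv.trans ?_)
        rw [inv_div]
        gcongr
        norm_num
    _ = 2 / Real.sqrt K * wNorm G⁻¹ u := by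
        rw [wNorm, Real.sqrt_mul (by positivity), Real.sqrt_div' _ hKpos.le,
          show (4 : ℝ) = 2 ^ 2 by norm_num, Real.sqrt_sq zero_le_two]

/-- Let `φ(x_k)`, `k = 1,…,K`, be feature vectors with `‖φ(x_k)‖₂ ≤ C`
(sampled i.i.d. from `ν` with invertible second moment `G = E_ν[φφᵀ]`, positive definite),
and `Ḡ_K = Σ_k φ(x_k)φ(x_k)ᵀ + λI`.  If
`‖Ḡ_K/K − (G + (λ/K)I)‖ ≤ 1/(2‖G⁻¹‖)` and `λ/K ≤ 1/(4‖G⁻¹‖)`, then for every `u`: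
`‖u‖_{Ḡ_K⁻¹} ≤ (2/√K)·‖u‖_{G⁻¹}`. -/
theorem stmt14 {d K : ℕ} (hK : 0 < K) (C lam : ℝ) (hlam : 0 < lam)
    (φ : Fin K → Fin d → ℝ)
    (hC : ∀ k, Real.sqrt (∑ i, (φ k i) ^ 2) ≤ C)
    (G : Matrix (Fin d) (Fin d) ℝ) (hG : G.PosDef)
    (hclose : matOpNorm ((K : ℝ)⁻¹ •
        (∑ k, Matrix.vecMulVec (φ k) (φ k) + lam • (1 : Matrix (Fin d) (Fin d) ℝ))
        - (G + (lam / K) • (1 : Matrix (Fin d) (Fin d) ℝ)))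
      ≤ 1 / (2 * matOpNorm G⁻¹))
    (hlamK : lam / K ≤ 1 / (4 * matOpNorm G⁻¹)) :
    ∀ u : Fin d → ℝ,
      wNorm (∑ k, Matrix.vecMulVec (φ k) (φ k) + lam • (1 : Matrix (Fin d) (Fin d) ℝ))⁻¹ u
        ≤ (2 / Real.sqrt K) * wNorm G⁻¹ u :=
  stmt14_general hK lam hlam φ G hG hclose
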